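/- arXiv:1404.0308 — 3 statements merged into one kernel-verified Lean document; each statement's English description precedes it below -/
import Mathlib

section
/- Let L be a field and let G be a finite group acting by field automorphisms on the rational function field L(x_1,…,x_n) in n variables over L. Suppose that (i) σ(L) ⊆ L for every σ ∈ G, (ii) the restriction of the G-action to L is faithful, and (iii) for every σ ∈ G there exist A(σ) ∈ GL_n(L) and a column vector B(σ) ∈ L^n such that (σ(x_1),…,σ(x_n))ᵀ = A(σ)·(x_1,…,x_n)ᵀ + B(σ). Then there exist z_1,…,z_n ∈ L(x_1,…,x_n) such that L(x_1,…,x_n) = L(z_1,…,z_n) and σ(z_i) = z_i for every σ ∈ G and every 1 ≤ i ≤ n. -/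
noncomputable section

/-- The rational function field over `k` in variables indexed by `σ`:
the fraction field of the polynomial ring `k[x_i : i ∈ σ]`. -/
abbrev RatFn (k : Type) [Field k] (σ : Type) : Type := FractionRing (MvPolynomial σ k)

/-- The group of `k`-automorphisms of the rational function field `RatFn k σ`. -/
abbrev RatFnAut (k : Type) [Field k] (σ : Type) : Type := (RatFn k σ) ≃ₐ[k] (RatFn k σ)

/-- The variable `x_i`, viewed as an element of the rational function field. -/
def Xv (k : Type) [Field k] {σ : Type} (i : σ) : RatFn k σ :=
  algebraMap (MvPolynomial σ k) (RatFn k σ) (MvPolynomial.X i)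

/-- `σ` is the Noether action of `G` on `k(x_g : g ∈ G)`, i.e. the action by
`k`-automorphisms determined by `h • x_g = x_{h*g}`. -/
def IsNoetherAction (k : Type) [Field k] (G : Type) [Group G]
    (σ : G →* RatFnAut k G) : Prop :=
  ∀ h g : G, σ h (Xv k g) = Xv k (h * g)

/-- A field extension `K/k` is `k`-rational if it is `k`-isomorphic to a rational
function field in finitely many variables over `k`. -/
def IsRationalExt (k : Type) [Field k] (K : Type) [Field K] [Algebra k K] : Prop :=
  ∃ n : ℕ, Nonempty (K ≃ₐ[k] RatFn k (Fin n))

/-- A field extension `K/k` is stably `k`-rational if a rational function field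
in finitely many variables over `K` is `k`-rational. -/
def IsStablyRationalExt (k : Type) [Field k] (K : Type) [Field K] [Algebra k K] : Prop :=
  ∃ m : ℕ, IsRationalExt k (FractionRing (MvPolynomial (Fin m) K))

/-- Two field extensions `K/k` and `L/k` are stably `k`-isomorphic if rational function
fields in finitely many variables over `K` resp. `L` are `k`-isomorphic. -/
def IsStablyIsomorphicExt (k : Type) [Field k] (K L : Type) [Field K] [Field L]
    [Algebra k K] [Algebra k L] : Prop :=
  ∃ m n : ℕ,
    Nonempty ((FractionRing (MvPolynomial (Fin m) K)) ≃ₐ[k] (FractionRing (MvPolynomial (Fin n) L)))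

/-- The Noether field `k(G) = k(x_g : g ∈ G)^G`, realized as the fixed field of the
Noether action `σ` of `G` on the rational function field `k(x_g : g ∈ G)`. -/
def NoetherField (k : Type) [Field k] (G : Type) [Group G] (σ : G →* RatFnAut k G) :
    IntermediateField k (RatFn k G) :=
  IntermediateField.fixedField σ.range

/-- The Noether field `k(G)` is `k`-rational. -/
def NoetherRational (k : Type) [Field k] (G : Type) [Group G] (σ : G →* RatFnAut k G) : Prop :=
  IsRationalExt k (NoetherField k G σ)

/-- The Noether field `k(G)` is stably `k`-rational. -/
def NoetherStablyRational (k : Type) [Field k] (G : Type) [Group G]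
    (σ : G →* RatFnAut k G) : Prop :=
  IsStablyRationalExt k (NoetherField k G σ)

/-- The Noether fields `k(G₁)` and `k(G₂)` are stably `k`-isomorphic. -/
def NoetherStablyIsomorphic (k : Type) [Field k] (G₁ G₂ : Type) [Group G₁] [Group G₂]
    (σ₁ : G₁ →* RatFnAut k G₁) (σ₂ : G₂ →* RatFnAut k G₂) : Prop :=
  IsStablyIsomorphicExt k (NoetherField k G₁ σ₁) (NoetherField k G₂ σ₂)

/-!
By the affine hypothesis the `L`-span `V` of `1, x₁, …, xₙ` is `G`-stable, and `G` acts on it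
semilinearly with respect to its faithful action `ρ` on `L`. Such a space is spanned by its `G`-fixed vectors (Speiser's lemma):
a functional `f` vanishing on all the traces `∑_g σ_g(a v) = ∑_g ρ_g(a) σ_g(v)` satisfies
`∑_g f(σ_g v) ρ_g = 0` as a function of `a`, so Dedekind's independence of the distinct
characters `ρ_g` gives `f(v) = 0`. Extending `{1}` by fixed vectors to a basis of `V`, which
has dimension at most `n + 1`, yields fixed `z₁, …, zₙ` whose `L`-span with `1` contains every
`xᵢ`.
-/

open Submodule Set

theorem RingHom.exists_monoidHom_restrict {L K : Type*} [Field L] [Ring K] [Nontrivial K]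
    [Algebra L K] (f : K →+* K) (hf : ∀ a, ∃ b, f (algebraMap L K a) = algebraMap L K b) :
    ∃ r : L →* L, ∀ a, f (algebraMap L K a) = algebraMap L K (r a) := by
  choose r hr using hf
  have hinj := (algebraMap L K).injective
  refine ⟨{ toFun := r, map_one' := hinj ?_, map_mul' := fun a b => hinj ?_ }, hr⟩
  · rw [← hr, map_one, map_one]
  · rw [map_mul, ← hr, ← hr, ← hr, map_mul, map_mul]

namespace SemilinearAction

variable {L K G : Type*} [Field L] [Ring K] [Algebra L K] [Group G]
  {σ : G →* (K ≃+* K)} {ρ : G → L →* L}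

variable (σ) in
def fixedPart (V : Submodule L K) : Set K := {v | v ∈ V ∧ ∀ g, σ g v = v}

theorem apply_smul (hσρ : ∀ g a, σ g (algebraMap L K a) = algebraMap L K (ρ g a))
    (g : G) (a : L) (v : K) : σ g (a • v) = ρ g a • σ g v := by
  rw [Algebra.smul_def, map_mul, hσρ, ← Algebra.smul_def]

theorem apply_mem_of_mem_span (hσρ : ∀ g a, σ g (algebraMap L K a) = algebraMap L K (ρ g a))
    {S : Set K} {V : Submodule L K} (hS : ∀ g, ∀ s ∈ S, σ g s ∈ V)
    (g : G) {v : K} (hv : v ∈ span L S) : σ g v ∈ V := by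
  induction hv using Submodule.span_induction with
  | mem s hs => exact hS g s hs
  | zero => rw [map_zero]; exact V.zero_mem
  | add u w _ _ hu hw => rw [map_add]; exact V.add_mem hu hw
  | smul a u _ hu => rw [apply_smul hσρ]; exact V.smul_mem _ hu

theorem injective_of_faithful (hσρ : ∀ g a, σ g (algebraMap L K a) = algebraMap L K (ρ g a))
    (hfaithful : ∀ g, (∀ a, σ g (algebraMap L K a) = algebraMap L K a) → g = 1) :
    Function.Injective ρ := by
  intro g h hgh
  refine (inv_mul_eq_one.mp (hfaithful _ fun a => ?_)).symm
  rw [map_mul, RingAut.mul_apply, hσρ, hgh, ← hσρ, ← RingAut.mul_apply, ← map_mul,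
    inv_mul_cancel, map_one, RingAut.one_apply]

theorem sum_apply_mem_fixedPart [Fintype G] {V : Submodule L K}
    (hV : ∀ g, ∀ v ∈ V, σ g v ∈ V) {x : K} (hx : x ∈ V) :
    ∑ g, σ g x ∈ fixedPart σ V := by
  refine ⟨V.sum_mem fun g _ => hV g x hx, fun h => ?_⟩
  rw [map_sum]
  exact Fintype.sum_equiv (Equiv.mulLeft h) _ _ fun g => by simp [map_mul]

theorem le_span_fixedPart [Fintype G]
    (hσρ : ∀ g a, σ g (algebraMap L K a) = algebraMap L K (ρ g a))
    (hρ : Function.Injective ρ) {V : Submodule L K} (hV : ∀ g, ∀ v ∈ V, σ g v ∈ V) :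
    V ≤ span L (fixedPart σ V) := by
  intro x hx
  by_contra hxW
  obtain ⟨f, hfx, hfW⟩ := exists_dual_map_eq_bot_of_notMem hxW inferInstance
  have hf_fixed : ∀ v ∈ fixedPart σ V, f v = 0 := fun v hv =>
    (Submodule.eq_bot_iff _).mp hfW (f v) (mem_map_of_mem (subset_span hv))
  have hrel : ∀ a : L, ∑ g, f (σ g x) * ρ g a = 0 := by
    intro a
    rw [← hf_fixed _ (sum_apply_mem_fixedPart hV (V.smul_mem a hx)), map_sum]
    simp only [apply_smul hσρ, map_smul, smul_eq_mul, mul_comm]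
  have hcoeff := Fintype.linearIndependent_iff.mp ((linearIndependent_monoidHom L L).comp ρ hρ)
    (fun g => f (σ g x)) (funext fun a => by simpa using hrel a) 1
  rw [map_one, RingAut.one_apply] at hcoeff
  exact hfx hcoeff

end SemilinearAction

theorem exists_range_subset_span_insert_le {L M : Type*} [Field L] [AddCommGroup M]
    [Module L M] {n : ℕ} {v₀ : M} {x : Fin n → M} {F : Set M}
    (hv₀ : v₀ ≠ 0) (hv₀F : v₀ ∈ F)
    (hF : span L F = span L (insert v₀ (range x))) :
    ∃ z : Fin n → M, range z ⊆ F ∧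
      span L (insert v₀ (range x)) ≤ span L (insert v₀ (range z)) := by
  classical
  obtain ⟨b, hbF, hv₀b, hFb, hb⟩ := exists_linearIndepOn_id_extension
    ((linearIndepOn_singleton_iff L).mpr hv₀) (singleton_subset_iff.mpr hv₀F)
  have hb_card : Cardinal.mk b ≤ n + 1 := calc
    Cardinal.mk b ≤ Cardinal.mk (insert v₀ (range x) : Set M) := by
      refine (linearIndependent_le_span' _ hb _ ?_).trans_eq (Cardinal.mk_fintype _).symm
      rintro _ ⟨y, rfl⟩
      exact hF ▸ subset_span (hbF y.2)
    _ ≤ n + 1 := Cardinal.mk_insert_le.trans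
      (by gcongr; simpa using Cardinal.mk_range_le_lift (f := x))
  set t := b \ {v₀}
  have ht_card : Cardinal.mk t ≤ n := by
    rw [← Cardinal.add_one_le_add_one_iff, ← Cardinal.mk_insert (fun h => h.2 rfl),
      insert_sdiff_singleton, insert_eq_of_mem (hv₀b rfl)]
    exact hb_card
  obtain ⟨ι⟩ : Nonempty (t ↪ Fin n) := Cardinal.lift_mk_le'.mp (by simpa using ht_card)
  obtain ⟨z, hz_t, hz_v₀⟩ : ∃ z : Fin n → M,
      (∀ y, z (ι y) = y) ∧ ∀ j, (¬∃ y, ι y = j) → z j = v₀ :=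
    ⟨_, ι.injective.extend_apply _ _, fun j hj => Function.extend_apply' _ _ _ hj⟩
  refine ⟨z, ?_, ?_⟩
  · rintro _ ⟨j, rfl⟩
    by_cases hj : ∃ y, ι y = j
    · obtain ⟨y, rfl⟩ := hj
      rw [hz_t]
      exact hbF y.2.1
    · rw [hz_v₀ j hj]
      exact hv₀F
  · have hb_sub : b ⊆ insert v₀ (range z) := by
      intro y hy
      by_cases hy₀ : y = v₀
      · exact Or.inl hy₀
      · exact Or.inr ⟨ι ⟨y, hy, hy₀⟩, hz_t _⟩
    rw [← hF, span_le]
    exact hFb.trans (span_mono hb_sub)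

theorem sum_algebraMap_mul_add_mem_span {L K ι : Type*} [Field L] [Ring K] [Algebra L K]
    [Fintype ι] (x : ι → K) (c : ι → L) (d : L) :
    ∑ j, algebraMap L K (c j) * x j + algebraMap L K d ∈ span L (insert 1 (range x)) := by
  refine add_mem (sum_mem fun j _ => ?_) ?_
  · rw [← Algebra.smul_def]
    exact smul_mem _ _ (subset_span (mem_insert_of_mem _ ⟨j, rfl⟩))
  · rw [Algebra.algebraMap_eq_smul_one]
    exact smul_mem _ _ (subset_span (mem_insert _ _))

theorem adjoin_range_Xv_eq_top (L ι : Type) [Field L] :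
    IntermediateField.adjoin L (range (Xv L (σ := ι))) = ⊤ := by
  rw [eq_top_iff]
  rintro x -
  obtain ⟨p, q, -, rfl⟩ := IsFractionRing.div_surjective (A := MvPolynomial ι L) x
  have hmem : ∀ r : MvPolynomial ι L, algebraMap (MvPolynomial ι L) (RatFn L ι) r ∈
      IntermediateField.adjoin L (range (Xv L (σ := ι))) := by
    intro r
    induction r using MvPolynomial.induction_on with
    | C a =>
        rw [← MvPolynomial.algebraMap_eq, ← IsScalarTower.algebraMap_apply]
        exact IntermediateField.algebraMap_mem _ a
    | add p q hp hq => rw [map_add]; exact add_mem hp hq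
    | mul_X p i hp =>
        rw [map_mul]
        exact mul_mem hp (IntermediateField.subset_adjoin _ _ ⟨i, rfl⟩)
  exact div_mem (hmem p) (hmem q)

theorem adjoin_range_eq_top_of_span_le {L ι : Type} [Field L] {ι' : Type*}
    {z : ι' → RatFn L ι}
    (h : span L (insert 1 (range (Xv L))) ≤ span L (insert 1 (range z))) :
    IntermediateField.adjoin L (range z) = ⊤ := by
  have hspan : span L (insert 1 (range z)) ≤
      (IntermediateField.adjoin L (range z)).toSubalgebra.toSubmodule :=
    span_le.mpr (insert_subset (IntermediateField.adjoin L _).one_mem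
      (IntermediateField.subset_adjoin L _))
  rw [eq_top_iff, ← adjoin_range_Xv_eq_top, IntermediateField.adjoin_le_iff]
  rintro _ ⟨i, rfl⟩
  exact hspan (h (subset_span (mem_insert_of_mem _ ⟨i, rfl⟩)))

/-- **Hajja–Kang.** Let `G` be a finite group acting by field automorphisms on the rational
function field `L(x₁,…,xₙ)` such that each `σ ∈ G` maps `L` into `L`, the restricted action
on `L` is faithful, and each `σ ∈ G` acts on the variables affinely:
`σ(xᵢ) = Σⱼ A(σ)ᵢⱼ xⱼ + B(σ)ᵢ` with `A(σ) ∈ GLₙ(L)`, `B(σ) ∈ Lⁿ`. Then there are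
`z₁,…,zₙ ∈ L(x₁,…,xₙ)`, fixed by every `σ ∈ G`, with `L(x₁,…,xₙ) = L(z₁,…,zₙ)`. -/
theorem statement14 (L : Type) [Field L] (n : ℕ) (G : Type) [Group G] [Finite G]
    (σ : G →* (RatFn L (Fin n) ≃+* RatFn L (Fin n)))
    (hL : ∀ (g : G) (a : L), ∃ b : L,
      σ g (algebraMap L (RatFn L (Fin n)) a) = algebraMap L (RatFn L (Fin n)) b)
    (hfaithful : ∀ g : G,
      (∀ a : L, σ g (algebraMap L (RatFn L (Fin n)) a) = algebraMap L (RatFn L (Fin n)) a) →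
      g = 1)
    (haffine : ∀ g : G, ∃ (A : GL (Fin n) L) (B : Fin n → L), ∀ i : Fin n,
      σ g (Xv L i) =
        (∑ j : Fin n, algebraMap L (RatFn L (Fin n)) ((A : Matrix (Fin n) (Fin n) L) i j)
            * Xv L j)
          + algebraMap L (RatFn L (Fin n)) (B i)) :
    ∃ z : Fin n → RatFn L (Fin n),
      IntermediateField.adjoin L (Set.range z) = ⊤ ∧
      ∀ (g : G) (i : Fin n), σ g (z i) = z i := by
  have := Fintype.ofFinite G
  choose ρ hρ using fun g => (σ g).toRingHom.exists_monoidHom_restrict (hL g)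
  set V := span L (insert 1 (range (Xv L (σ := Fin n))))
  have hV : ∀ g, ∀ v ∈ V, σ g v ∈ V := by
    refine fun g v hv => SemilinearAction.apply_mem_of_mem_span hρ ?_ g hv
    rintro g _ (rfl | ⟨i, rfl⟩)
    · rw [map_one]
      exact subset_span (mem_insert _ _)
    · obtain ⟨A, B, hAB⟩ := haffine g
      rw [hAB]
      exact sum_algebraMap_mul_add_mem_span _ _ _
  have hspan : span L (SemilinearAction.fixedPart σ V) = V :=
    le_antisymm (span_le.mpr fun _ hv => hv.1) (SemilinearAction.le_span_fixedPart hρ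
      (SemilinearAction.injective_of_faithful hρ hfaithful) hV)
  have h1 : 1 ∈ SemilinearAction.fixedPart σ V :=
    ⟨subset_span (mem_insert _ _), fun g => map_one _⟩
  obtain ⟨z, hzF, hz⟩ := exists_range_subset_span_insert_le one_ne_zero h1 hspan
  exact ⟨z, adjoin_range_eq_top_of_span_le hz, fun g i => (hzF ⟨i, rfl⟩).2 g⟩
end
end

section
/- Let L be a field, let L(x) be the rational function field in one variable x over L, and let G be a finite group acting on L(x) by field automorphisms. Suppose that for every σ ∈ G one has σ(L) ⊆ L and σ(x) = a_σ x + b_σ with a_σ, b_σ ∈ L and a_σ ≠ 0. Then L(x)^G = L^G(f) for some polynomial f ∈ L[x]; in fact, if m = min{deg g : g ∈ L[x]^G \ L}, then any polynomial f ∈ L[x]^G with deg f = m satisfies L(x)^G = L^G(f). -/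
noncomputable section

/-- The fixed subfield of a field `F` under the action of a group `G` by field
automorphisms given by `σ`. -/
def fixedSubfield (G : Type) [Group G] (F : Type) [Field F] (σ : G →* (F ≃+* F)) :
    Subfield F where
  carrier := {x | ∀ g : G, σ g x = x}
  zero_mem' := fun g => map_zero _
  one_mem' := fun g => map_one _
  add_mem' := by intro a b ha hb g; rw [map_add, ha g, hb g]
  mul_mem' := by intro a b ha hb g; rw [map_mul, ha g, hb g]
  neg_mem' := by intro a ha g; rw [map_neg, ha g]
  inv_mem' := by intro a ha g; rw [map_inv₀, ha g]

/-- A polynomial `p ∈ L[x]` is `G`-invariant (for an action of `G` on `L(x)` mapping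
polynomials to polynomials) if its image in `L(x)` is fixed by every `g ∈ G`. -/
def IsInvariantPoly (G : Type) [Group G] (L : Type) [Field L]
    (σ : G →* (RatFunc L ≃+* RatFunc L)) (p : Polynomial L) : Prop :=
  ∀ g : G, σ g (algebraMap (Polynomial L) (RatFunc L) p) =
    algebraMap (Polynomial L) (RatFunc L) p

/-- `L^G(f)`: the subfield of `L(x)` generated by the fixed field of the induced action
on `L` together with (the image of) the polynomial `f`. -/
def genSubfield (G : Type) [Group G] (L : Type) [Field L]
    (σ : G →* (RatFunc L ≃+* RatFunc L)) (f : Polynomial L) : Subfield (RatFunc L) :=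
  Subfield.closure ((fun a : L => (RatFunc.C a : RatFunc L)) ''
      {a : L | ∀ g : G, σ g (RatFunc.C a) = RatFunc.C a} ∪
    {algebraMap (Polynomial L) (RatFunc L) f})

/-!
Each `σ g` maps `L[x]` to itself preserving degrees, since it acts on `L` by a field
homomorphism and sends `x` to a linear polynomial. So if `f` and `s` are invariant, uniqueness
of division with remainder makes `s / f` and `s % f` invariant too. When `f` has minimal
positive degree among invariant polynomials, `s % f` is an invariant constant, and induction on
the degree puts every invariant polynomial into `L^G(f)`. A fixed rational function `p / q`
equals `(p ∏_{g ≠ 1} σ_g q) / ∏_g σ_g q`, a quotient of invariant polynomials. Finally, an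
invariant polynomial of positive degree exists: `∏_g σ_g x`.
-/

open Polynomial

theorem Polynomial.fixed_mod_div_of_degree_preserving {K : Type*} [Field K]
    {φ : K[X] →+* K[X]} (hφ : ∀ p, (φ p).degree = p.degree) {f h : K[X]}
    (hf : φ f = f) (hh : φ h = h) : φ (h % f) = h % f ∧ φ (h / f) = h / f := by
  rcases eq_or_ne f 0 with rfl | hf0
  · simp [hh]
  have hdiv : f * φ (h / f) + φ (h % f) = f * (h / f) + h % f := by
    calc f * φ (h / f) + φ (h % f) = φ (f * (h / f) + h % f) := by rw [map_add, map_mul, hf]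
      _ = f * (h / f) + h % f := by rw [EuclideanDomain.div_add_mod, hh]
  have hmod : φ (h % f) = h % f := by
    have hlt : (φ (h % f)).degree < f.degree := (hφ _).trans_lt (degree_mod_lt h hf0)
    calc φ (h % f) = (f * φ (h / f) + φ (h % f)) % f := by
          rw [add_mod, EuclideanDomain.mod_eq_zero.2 (dvd_mul_right _ _), zero_add,
            (mod_eq_self_iff hf0).2 hlt]
      _ = h % f := by rw [hdiv, EuclideanDomain.div_add_mod]
  refine ⟨hmod, mul_left_cancel₀ hf0 ?_⟩
  rwa [hmod, add_left_inj] at hdiv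

theorem exists_eq_div_of_mem_fixedSubfield {F G : Type} [Field F] [Group G] [Fintype G]
    (σ : G →* (F ≃+* F)) {A : Subring F} (hA : ∀ g, ∀ a ∈ A, σ g a ∈ A)
    {u a b : F} (hu : u ∈ fixedSubfield G F σ) (ha : a ∈ A) (hb : b ∈ A) (hb0 : b ≠ 0)
    (hab : u = a / b) :
    ∃ a' b', a' ∈ A ∧ b' ∈ A ∧ a' ∈ fixedSubfield G F σ ∧ b' ∈ fixedSubfield G F σ ∧
      u = a' / b' := by
  classical
  set c := ∏ g ∈ Finset.univ.erase 1, σ g b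
  have hnorm : b * c = ∏ g, σ g b := by
    rw [← Finset.mul_prod_erase _ _ (Finset.mem_univ 1), map_one]; rfl
  have hnorm0 : ∏ g, σ g b ≠ 0 :=
    Finset.prod_ne_zero_iff.2 fun g _ => (map_ne_zero (σ g)).2 hb0
  have hnorm_fixed : ∏ g, σ g b ∈ fixedSubfield G F σ := fun h => by
    rw [map_prod]
    exact Fintype.prod_equiv (Equiv.mulLeft h) _ _ fun g => by simp [map_mul]
  refine ⟨u * ∏ g, σ g b, ∏ g, σ g b, ?_, Subring.prod_mem _ fun g _ => hA g b hb,
    Subfield.mul_mem _ hu hnorm_fixed, hnorm_fixed, by rw [mul_div_cancel_right₀ _ hnorm0]⟩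
  rw [← hnorm, hab, ← mul_assoc, div_mul_cancel₀ _ hb0]
  exact A.mul_mem ha (A.prod_mem fun g _ => hA g b hb)

theorem algebraMap_C_mem_genSubfield {L G : Type} [Field L] [Group G]
    {σ : G →* (RatFunc L ≃+* RatFunc L)} {a : L} (ha : IsInvariantPoly G L σ (C a)) (f : L[X]) :
    algebraMap L[X] (RatFunc L) (C a) ∈ genSubfield G L σ f := by
  unfold IsInvariantPoly at ha
  rw [RatFunc.algebraMap_C] at ha ⊢
  exact Subfield.subset_closure (Or.inl ⟨a, ha, rfl⟩)

structure IsAffine {L G : Type} [Field L] [Group G] (σ : G →* (RatFunc L ≃+* RatFunc L)) :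
    Prop where
  map_C : ∀ (g : G) (a : L), ∃ b : L, σ g (RatFunc.C a) = RatFunc.C b
  map_X : ∀ g : G, ∃ a b : L, a ≠ 0 ∧
    σ g RatFunc.X = RatFunc.C a * RatFunc.X + RatFunc.C b

namespace IsAffine

variable {L G : Type} [Field L] [Group G] {σ : G →* (RatFunc L ≃+* RatFunc L)}

def constAction (hσ : IsAffine σ) (g : G) : L →+* L where
  toFun a := (hσ.map_C g a).choose
  map_one' := RatFunc.C.injective <| (hσ.map_C g 1).choose_spec.symm.trans <| by
    rw [map_one, map_one]
  map_zero' := RatFunc.C.injective <| (hσ.map_C g 0).choose_spec.symm.trans <| by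
    rw [map_zero, map_zero]
  map_mul' a b := RatFunc.C.injective <| (hσ.map_C g (a * b)).choose_spec.symm.trans <| by
    rw [map_mul, map_mul, map_mul]
    exact congr_arg₂ _ (hσ.map_C g a).choose_spec (hσ.map_C g b).choose_spec
  map_add' a b := RatFunc.C.injective <| (hσ.map_C g (a + b)).choose_spec.symm.trans <| by
    rw [map_add, map_add, map_add]
    exact congr_arg₂ _ (hσ.map_C g a).choose_spec (hσ.map_C g b).choose_spec

theorem C_constAction (hσ : IsAffine σ) (g : G) (a : L) :
    RatFunc.C (hσ.constAction g a) = σ g (RatFunc.C a) :=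
  (hσ.map_C g a).choose_spec.symm

def polyAction (hσ : IsAffine σ) (g : G) : L[X] →+* L[X] :=
  eval₂RingHom (C.comp (hσ.constAction g))
    (C (hσ.map_X g).choose * X + C (hσ.map_X g).choose_spec.choose)

theorem algebraMap_polyAction (hσ : IsAffine σ) (g : G) (p : L[X]) :
    algebraMap L[X] (RatFunc L) (hσ.polyAction g p) = σ g (algebraMap L[X] (RatFunc L) p) := by
  refine RingHom.congr_fun (f := (algebraMap L[X] (RatFunc L)).comp (hσ.polyAction g))
    (g := (σ g).toRingHom.comp (algebraMap L[X] (RatFunc L))) (ringHom_ext (fun a => ?_) ?_) p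
  · simp only [polyAction, RingHom.comp_apply, coe_eval₂RingHom, eval₂_C, RatFunc.algebraMap_C,
      C_constAction]
    rfl
  · simp only [polyAction, RingHom.comp_apply, coe_eval₂RingHom, eval₂_X, map_add, map_mul,
      RatFunc.algebraMap_C, RatFunc.algebraMap_X]
    exact (hσ.map_X g).choose_spec.choose_spec.2.symm

theorem degree_polyAction (hσ : IsAffine σ) (g : G) (p : L[X]) :
    (hσ.polyAction g p).degree = p.degree := by
  have ha := (hσ.map_X g).choose_spec.choose_spec.1
  have hcomp : hσ.polyAction g p = (p.map (hσ.constAction g)).comp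
      (C (hσ.map_X g).choose * X + C (hσ.map_X g).choose_spec.choose) := by
    rw [comp, eval₂_map]; rfl
  rw [hcomp, degree_comp (by rw [degree_linear ha]; exact zero_lt_one), degree_linear ha, mul_one,
    degree_map]

theorem polyAction_mul (hσ : IsAffine σ) (g h : G) (p : L[X]) :
    hσ.polyAction (g * h) p = hσ.polyAction g (hσ.polyAction h p) :=
  RatFunc.algebraMap_injective L <| by simp only [algebraMap_polyAction, map_mul]; rfl

theorem isInvariantPoly_iff (hσ : IsAffine σ) {p : L[X]} :
    IsInvariantPoly G L σ p ↔ ∀ g, hσ.polyAction g p = p :=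
  forall_congr' fun g => by
    rw [← hσ.algebraMap_polyAction, (RatFunc.algebraMap_injective L).eq_iff]

theorem isInvariantPoly_mod_div (hσ : IsAffine σ) {f s : L[X]} (hf : IsInvariantPoly G L σ f)
    (hs : IsInvariantPoly G L σ s) :
    IsInvariantPoly G L σ (s % f) ∧ IsInvariantPoly G L σ (s / f) := by
  simp only [hσ.isInvariantPoly_iff] at hf hs ⊢
  exact forall_and.1 fun g =>
    fixed_mod_div_of_degree_preserving (hσ.degree_polyAction g) (hf g) (hs g)

theorem exists_isInvariantPoly_natDegree_pos [Fintype G] (hσ : IsAffine σ) :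
    ∃ p, IsInvariantPoly G L σ p ∧ 0 < p.natDegree := by
  refine ⟨∏ g, hσ.polyAction g X, hσ.isInvariantPoly_iff.2 fun h => ?_, ?_⟩
  · rw [map_prod]
    exact Fintype.prod_equiv (Equiv.mulLeft h) _ _ fun g => (hσ.polyAction_mul h g X).symm
  · rw [natDegree_pos_iff_degree_pos, degree_prod]
    simp [degree_polyAction, Fintype.card_pos]

theorem algebraMap_mem_genSubfield (hσ : IsAffine σ) {f : L[X]}
    (hf : IsInvariantPoly G L σ f) (hfpos : 0 < f.natDegree)
    (hmin : ∀ p, IsInvariantPoly G L σ p → 0 < p.natDegree → f.natDegree ≤ p.natDegree)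
    {s : L[X]} (hs : IsInvariantPoly G L σ s) :
    algebraMap L[X] (RatFunc L) s ∈ genSubfield G L σ f := by
  induction hn : s.natDegree using Nat.strong_induction_on generalizing s with
  | _ n ih =>
    obtain ⟨hmod, hdiv⟩ := hσ.isInvariantPoly_mod_div hf hs
    have hmod0 : (s % f).natDegree = 0 := by
      by_contra h
      exact (natDegree_mod_lt s hfpos.ne').not_ge (hmin _ hmod (Nat.pos_of_ne_zero h))
    have hdiv_mem : algebraMap L[X] (RatFunc L) (s / f) ∈ genSubfield G L σ f := by
      rcases eq_or_ne (s / f) 0 with h0 | h0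
      · rw [h0, map_zero]; exact zero_mem _
      have hs0 : s ≠ 0 := fun h => h0 (by rw [h, EuclideanDomain.zero_div])
      exact ih _ (hn ▸ natDegree_lt_natDegree h0
        (degree_div_lt hs0 (natDegree_pos_iff_degree_pos.1 hfpos))) hdiv rfl
    rw [← EuclideanDomain.div_add_mod s f, map_add, map_mul]
    refine add_mem (mul_mem (Subfield.subset_closure (Or.inr rfl)) hdiv_mem) ?_
    rw [eq_C_of_natDegree_eq_zero hmod0] at hmod ⊢
    exact algebraMap_C_mem_genSubfield hmod f

theorem fixedSubfield_eq_genSubfield [Fintype G] (hσ : IsAffine σ) {f : L[X]}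
    (hf : IsInvariantPoly G L σ f) (hfpos : 0 < f.natDegree)
    (hmin : ∀ p, IsInvariantPoly G L σ p → 0 < p.natDegree → f.natDegree ≤ p.natDegree) :
    fixedSubfield G (RatFunc L) σ = genSubfield G L σ f := by
  refine le_antisymm (fun u hu => ?_) (Subfield.closure_le.2 ?_)
  · obtain ⟨_, _, ⟨s, rfl⟩, ⟨t, rfl⟩, hs, ht, rfl⟩ := exists_eq_div_of_mem_fixedSubfield σ
      (A := (algebraMap L[X] (RatFunc L)).range)
      (by rintro g _ ⟨p, rfl⟩; exact ⟨_, hσ.algebraMap_polyAction g p⟩) hu ⟨_, rfl⟩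
      ⟨_, rfl⟩ (RatFunc.algebraMap_ne_zero u.denom_ne_zero) u.num_div_denom.symm
    exact div_mem (hσ.algebraMap_mem_genSubfield hf hfpos hmin hs)
      (hσ.algebraMap_mem_genSubfield hf hfpos hmin ht)
  · rintro _ (⟨a, ha, rfl⟩ | rfl)
    exacts [ha, hf]

end IsAffine

/-- **Ahmad–Hajja–Kang.** Let a finite group `G` act on `L(x)` by field automorphisms with
`σ(L) ⊆ L` and `σ(x) = a_σ x + b_σ`, `a_σ ≠ 0`. Then `L(x)^G = L^G(f)` for some polynomial
`f ∈ L[x]`; in fact any `G`-invariant polynomial `f` whose degree is minimal among the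
degrees of nonconstant `G`-invariant polynomials satisfies `L(x)^G = L^G(f)`. -/
theorem statement15 (L : Type) [Field L] (G : Type) [Group G] [Finite G]
    (σ : G →* (RatFunc L ≃+* RatFunc L))
    (hL : ∀ (g : G) (a : L), ∃ b : L, σ g (RatFunc.C a) = RatFunc.C b)
    (haff : ∀ g : G, ∃ a b : L, a ≠ 0 ∧
      σ g (RatFunc.X) = RatFunc.C a * RatFunc.X + RatFunc.C b) :
    (∃ f : Polynomial L, IsInvariantPoly G L σ f ∧
      fixedSubfield G (RatFunc L) σ = genSubfield G L σ f) ∧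
    (∀ f : Polynomial L, IsInvariantPoly G L σ f →
      f.natDegree = sInf {d : ℕ | ∃ p : Polynomial L,
        IsInvariantPoly G L σ p ∧ 0 < p.natDegree ∧ p.natDegree = d} →
      fixedSubfield G (RatFunc L) σ = genSubfield G L σ f) := by
  have := Fintype.ofFinite G
  have hσ : IsAffine σ := ⟨hL, haff⟩
  set S := {d : ℕ | ∃ p : Polynomial L,
    IsInvariantPoly G L σ p ∧ 0 < p.natDegree ∧ p.natDegree = d}
  obtain ⟨p, hp, hp_pos⟩ := hσ.exists_isInvariantPoly_natDegree_pos
  obtain ⟨f₀, hf₀, hf₀_pos, hf₀_deg⟩ : sInf S ∈ S := Nat.sInf_mem ⟨_, p, hp, hp_pos, rfl⟩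
  have key : ∀ f : Polynomial L, IsInvariantPoly G L σ f → f.natDegree = sInf S →
      fixedSubfield G (RatFunc L) σ = genSubfield G L σ f := fun f hf hf_deg =>
    hσ.fixedSubfield_eq_genSubfield hf (by omega)
      fun q hq hq_pos => hf_deg ▸ Nat.sInf_le ⟨q, hq, hq_pos, rfl⟩
  exact ⟨⟨f₀, hf₀, key f₀ hf₀ hf₀_deg⟩, key⟩

end
end

section
/- Let k be a field with char k ≠ 2, let c ∈ k be nonzero, and let τ_3 be the k-automorphism of order 2 of the rational function field k(x,y,z) given by τ_3 : x ↦ y, y ↦ x, z ↦ c/(xyz). Then the fixed field k(x,y,z)^⟨τ_3⟩ equals k(t_1,t_2,t_3), where t_1 = xy/(x+y), t_2 = (xyz + c/z)/(x+y), and t_3 = (xyz − c/z)/(x−y). -/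
noncomputable section

/-!
`τ` swaps `x` with `y` and `xyz` with `c/z`, so `t₁, t₂, t₃` are invariant. Conversely,
`E = k(t₁, t₂, t₃)` contains `s = x + y = 4 t₁ (c - t₃²) / (t₂² - t₃²)` and `n = xy = t₁ s`, so `x`
is a root of `X² - s X + n` over `E` and `E + E x` is a field. It contains `x`, `y` and
`z = (t₂ s + t₃ (x - y)) / (2xy)`, hence is everything, and `p + q x` with `p, q ∈ E` is
`τ`-invariant only if `q (y - x) = 0`, i.e. only if it lies in `E`.
-/

open IntermediateField MvPolynomial

section FixedField

variable {k L : Type*} [Field k] [Field L] [Algebra k L]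

theorem mem_fixedField_zpowers_iff {τ : L ≃ₐ[k] L} {a : L} :
    a ∈ fixedField (Subgroup.zpowers τ) ↔ τ a = a :=
  ⟨fun h => h ⟨τ, Subgroup.mem_zpowers τ⟩, fun h g =>
    (Subgroup.zpowers_le (H := MulAction.stabilizer (L ≃ₐ[k] L) a)).mpr h g.2⟩

theorem AlgEquiv.inv_eq_div_mul_self (τ : L ≃ₐ[k] L) (a : L) : a⁻¹ = τ a / (a * τ a) := by
  rcases eq_or_ne a 0 with rfl | ha
  · simp
  · have : τ a ≠ 0 := (map_ne_zero τ).mpr ha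
    field_simp

/-- `E + E x`, a field because `x` is a root of `X² - (x + τ x) X + x τ x` over `E`, and the
inverse of `a ≠ 0` is `τ a / (a τ a)` with `a τ a ∈ E`. -/
def IntermediateField.quadraticAdjoin (E : IntermediateField k L) (τ : L ≃ₐ[k] L)
    (hfix : ∀ a ∈ E, τ a = a) (x : L) (hs : x + τ x ∈ E) (hn : x * τ x ∈ E) :
    IntermediateField k L where
  carrier := {a | ∃ p ∈ E, ∃ q ∈ E, p + q * x = a}
  mul_mem' := by
    rintro _ _ ⟨p, hp, q, hq, rfl⟩ ⟨r, hr, u, hu, rfl⟩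
    exact ⟨p * r - q * u * (x * τ x), by aesop, p * u + q * r + q * u * (x + τ x), by aesop,
      by ring⟩
  add_mem' := by
    rintro _ _ ⟨p, hp, q, hq, rfl⟩ ⟨r, hr, u, hu, rfl⟩
    exact ⟨p + r, add_mem hp hr, q + u, add_mem hq hu, by ring⟩
  algebraMap_mem' r := ⟨algebraMap k L r, E.algebraMap_mem r, 0, E.zero_mem, by simp⟩
  inv_mem' := by
    rintro _ ⟨p, hp, q, hq, rfl⟩
    have hnorm : (p + q * x) * τ (p + q * x) = p ^ 2 + p * q * (x + τ x) + q ^ 2 * (x * τ x) := by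
      rw [map_add, map_mul, hfix p hp, hfix q hq]; ring
    have hN : p ^ 2 + p * q * (x + τ x) + q ^ 2 * (x * τ x) ∈ E := by aesop
    refine ⟨(p + q * (x + τ x)) / _, div_mem (by aesop) hN, -q / _, div_mem (neg_mem hq) hN, ?_⟩
    rw [τ.inv_eq_div_mul_self, hnorm, map_add, map_mul, hfix p hp, hfix q hq]
    ring

theorem IntermediateField.fixedField_zpowers_eq (E : IntermediateField k L) (τ : L ≃ₐ[k] L)
    (hfix : ∀ a ∈ E, τ a = a) (x : L) (hx : τ x ≠ x)
    (hspan : ∀ a, ∃ p ∈ E, ∃ q ∈ E, p + q * x = a) :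
    fixedField (Subgroup.zpowers τ) = E := by
  refine le_antisymm (fun a ha => ?_) fun a ha => mem_fixedField_zpowers_iff.mpr (hfix a ha)
  obtain ⟨p, hp, q, hq, rfl⟩ := hspan a
  rw [mem_fixedField_zpowers_iff, map_add, map_mul, hfix p hp, hfix q hq] at ha
  have hq0 : q = 0 := by
    have : q * (τ x - x) = 0 := by linear_combination ha
    exact (mul_eq_zero.mp this).resolve_right (sub_ne_zero.mpr hx)
  simpa [hq0] using hp

end FixedField

section RatFn

variable {k : Type} [Field k] {σ : Type}

theorem aeval_Xv (p : MvPolynomial σ k) :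
    aeval (Xv k) p = algebraMap (MvPolynomial σ k) (RatFn k σ) p :=
  (DFunLike.congr_fun (aeval_unique (IsScalarTower.toAlgHom k _ (RatFn k σ))) p).symm

theorem aeval_Xv_ne_zero {p : MvPolynomial σ k} (hp : p ≠ 0) : aeval (Xv k) p ≠ 0 := by
  rw [aeval_Xv]
  exact (map_ne_zero_iff _ (IsFractionRing.injective _ _)).mpr hp

theorem adjoin_range_Xv : adjoin k (Set.range (Xv k : σ → RatFn k σ)) = ⊤ := by
  refine eq_top_iff.mpr fun a _ => ?_
  have hpoly (p : MvPolynomial σ k) :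
      algebraMap (MvPolynomial σ k) (RatFn k σ) p ∈ adjoin k (Set.range (Xv k)) := by
    rw [← aeval_Xv]
    refine algebra_adjoin_le_adjoin k _ ?_
    rw [Algebra.adjoin_range_eq_range_aeval]
    exact ⟨p, rfl⟩
  obtain ⟨p, q, _, rfl⟩ := IsFractionRing.div_surjective (A := MvPolynomial σ k) a
  exact div_mem (hpoly p) (hpoly q)

theorem Xv_injective : Function.Injective (Xv k : σ → RatFn k σ) :=
  (IsFractionRing.injective (MvPolynomial σ k) (RatFn k σ)).comp (X_injective (R := k))

theorem Xv_ne_zero (i : σ) : Xv k i ≠ 0 := by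
  simpa using aeval_Xv_ne_zero (X_ne_zero (R := k) i)

theorem Xv_add_Xv_ne_zero [DecidableEq σ] {i j : σ} (hij : i ≠ j) : Xv k i + Xv k j ≠ 0 := by
  have hp : (X i + X j : MvPolynomial σ k) ≠ 0 := fun h => by
    simpa [Pi.single_apply, hij.symm] using congrArg (eval (Pi.single i 1)) h
  simpa using aeval_Xv_ne_zero hp

end RatFn

namespace Tau3

section Field

variable {K : Type*} [Field K]

def t₁ (x y : K) : K := x * y / (x + y)

def t₂ (c x y z : K) : K := (x * y * z + c / z) / (x + y)

def t₃ (c x y z : K) : K := (x * y * z - c / z) / (x - y)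

def gens (c x y z : K) : Set K := {t₁ x y, t₂ c x y z, t₃ c x y z}

variable {c x y z : K}

theorem mul_eq_t₁_mul (hs : x + y ≠ 0) : x * y = t₁ x y * (x + y) := by
  unfold t₁; field_simp

theorem eq_t₂_t₃ (h2 : (2 : K) ≠ 0) (hx : x ≠ 0) (hy : y ≠ 0) (hz : z ≠ 0) (hs : x + y ≠ 0)
    (hd : x - y ≠ 0) :
    z = (t₂ c x y z * (x + y) + t₃ c x y z * (x - y)) / (2 * (x * y)) := by
  unfold t₂ t₃; field_simp; ring

theorem t₂_sq_sub_t₃_sq (hz : z ≠ 0) (hs : x + y ≠ 0) (hd : x - y ≠ 0) :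
    t₂ c x y z ^ 2 - t₃ c x y z ^ 2 =
      4 * x * y * ((c - y ^ 2 * z ^ 2) * (x ^ 2 * z ^ 2 - c)) /
        (z ^ 2 * (x + y) ^ 2 * (x - y) ^ 2) := by
  unfold t₂ t₃; field_simp; ring

theorem add_eq_t₁_t₂_t₃ (hz : z ≠ 0) (hs : x + y ≠ 0) (hd : x - y ≠ 0)
    (hT : t₂ c x y z ^ 2 - t₃ c x y z ^ 2 ≠ 0) :
    x + y = 4 * t₁ x y * (c - t₃ c x y z ^ 2) / (t₂ c x y z ^ 2 - t₃ c x y z ^ 2) := by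
  rw [eq_div_iff hT]
  unfold t₁ t₂ t₃; field_simp; ring

end Field

section Algebra

variable {k L : Type*} [Field k] [Field L] [Algebra k L] {τ : L ≃ₐ[k] L} {c : k} {x y z : L}

theorem t₁_mem_adjoin_gens : t₁ x y ∈ adjoin k (gens (algebraMap k L c) x y z) :=
  subset_adjoin k _ (by simp [gens])

theorem t₂_mem_adjoin_gens :
    t₂ (algebraMap k L c) x y z ∈ adjoin k (gens (algebraMap k L c) x y z) :=
  subset_adjoin k _ (by simp [gens])

theorem t₃_mem_adjoin_gens :
    t₃ (algebraMap k L c) x y z ∈ adjoin k (gens (algebraMap k L c) x y z) :=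
  subset_adjoin k _ (by simp [gens])

theorem add_mem_adjoin_gens (hz : z ≠ 0) (hs : x + y ≠ 0) (hd : x - y ≠ 0)
    (hT : t₂ (algebraMap k L c) x y z ^ 2 - t₃ (algebraMap k L c) x y z ^ 2 ≠ 0) :
    x + y ∈ adjoin k (gens (algebraMap k L c) x y z) := by
  rw [add_eq_t₁_t₂_t₃ hz hs hd hT]
  exact div_mem (mul_mem (mul_mem (ofNat_mem _ 4) t₁_mem_adjoin_gens)
      (sub_mem (IntermediateField.algebraMap_mem _ c) (pow_mem t₃_mem_adjoin_gens 2)))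
    (sub_mem (pow_mem t₂_mem_adjoin_gens 2) (pow_mem t₃_mem_adjoin_gens 2))

theorem mul_mem_adjoin_gens (hz : z ≠ 0) (hs : x + y ≠ 0) (hd : x - y ≠ 0)
    (hT : t₂ (algebraMap k L c) x y z ^ 2 - t₃ (algebraMap k L c) x y z ^ 2 ≠ 0) :
    x * y ∈ adjoin k (gens (algebraMap k L c) x y z) := by
  rw [mul_eq_t₁_mul hs]
  exact mul_mem t₁_mem_adjoin_gens (add_mem_adjoin_gens hz hs hd hT)

theorem map_t₁ (hx : τ x = y) (hy : τ y = x) : τ (t₁ x y) = t₁ x y := by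
  simp only [t₁, map_div₀, map_add, map_mul, hx, hy]; ring

theorem map_mul_mul (hx0 : x ≠ 0) (hy0 : y ≠ 0) (hx : τ x = y) (hy : τ y = x)
    (hz : τ z = algebraMap k L c / (x * y * z)) : τ (x * y * z) = algebraMap k L c / z := by
  rw [map_mul, map_mul, hx, hy, hz]; field_simp

theorem map_algebraMap_div (hc : algebraMap k L c ≠ 0)
    (hz : τ z = algebraMap k L c / (x * y * z)) : τ (algebraMap k L c / z) = x * y * z := by
  rw [map_div₀, AlgEquiv.commutes, hz, div_div_cancel₀ hc]

theorem map_t₂ (hc : algebraMap k L c ≠ 0) (hx0 : x ≠ 0) (hy0 : y ≠ 0) (hx : τ x = y)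
    (hy : τ y = x) (hz : τ z = algebraMap k L c / (x * y * z)) :
    τ (t₂ (algebraMap k L c) x y z) = t₂ (algebraMap k L c) x y z := by
  rw [t₂, map_div₀, map_add, map_add, map_mul_mul hx0 hy0 hx hy hz, map_algebraMap_div hc hz,
    hx, hy, add_comm, add_comm y]

theorem map_t₃ (hc : algebraMap k L c ≠ 0) (hx0 : x ≠ 0) (hy0 : y ≠ 0) (hx : τ x = y)
    (hy : τ y = x) (hz : τ z = algebraMap k L c / (x * y * z)) :
    τ (t₃ (algebraMap k L c) x y z) = t₃ (algebraMap k L c) x y z := by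
  rw [t₃, map_div₀, map_sub, map_sub, map_mul_mul hx0 hy0 hx hy hz, map_algebraMap_div hc hz,
    hx, hy, ← neg_sub, ← neg_sub x, neg_div_neg_eq]

theorem adjoin_gens_le_fixedField (hc : algebraMap k L c ≠ 0) (hx0 : x ≠ 0) (hy0 : y ≠ 0)
    (hx : τ x = y) (hy : τ y = x) (hz : τ z = algebraMap k L c / (x * y * z)) :
    adjoin k (gens (algebraMap k L c) x y z) ≤ fixedField (Subgroup.zpowers τ) := by
  refine adjoin_le_iff.mpr ?_
  rintro _ (rfl | rfl | rfl) <;> rw [SetLike.mem_coe, mem_fixedField_zpowers_iff]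
  exacts [map_t₁ hx hy, map_t₂ hc hx0 hy0 hx hy hz, map_t₃ hc hx0 hy0 hx hy hz]

theorem fixedField_zpowers_eq_adjoin_gens (h2 : (2 : L) ≠ 0) (hc : algebraMap k L c ≠ 0)
    (hx0 : x ≠ 0) (hy0 : y ≠ 0) (hz0 : z ≠ 0) (hs : x + y ≠ 0) (hd : x - y ≠ 0)
    (hT : t₂ (algebraMap k L c) x y z ^ 2 - t₃ (algebraMap k L c) x y z ^ 2 ≠ 0)
    (hgen : adjoin k {x, y, z} = ⊤)
    (hx : τ x = y) (hy : τ y = x) (hz : τ z = algebraMap k L c / (x * y * z)) :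
    fixedField (Subgroup.zpowers τ) = adjoin k (gens (algebraMap k L c) x y z) := by
  set E := adjoin k (gens (algebraMap k L c) x y z)
  have hfix (a : L) (ha : a ∈ E) : τ a = a :=
    mem_fixedField_zpowers_iff.mp (adjoin_gens_le_fixedField hc hx0 hy0 hx hy hz ha)
  have hsE := add_mem_adjoin_gens hz0 hs hd hT
  have hnE := mul_mem_adjoin_gens hz0 hs hd hT
  let S := E.quadraticAdjoin τ hfix x (hx ▸ hsE) (hx ▸ hnE)
  have hES (a : L) (ha : a ∈ E) : a ∈ S := ⟨a, ha, 0, E.zero_mem, by simp⟩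
  have hxS : x ∈ S := ⟨0, E.zero_mem, 1, E.one_mem, by simp⟩
  have hyS : y ∈ S := by simpa using sub_mem (hES _ hsE) hxS
  have hzS : z ∈ S := by
    rw [eq_t₂_t₃ (c := algebraMap k L c) h2 hx0 hy0 hz0 hs hd]
    exact div_mem (add_mem (mul_mem (hES _ t₂_mem_adjoin_gens) (hES _ hsE))
        (mul_mem (hES _ t₃_mem_adjoin_gens) (sub_mem hxS hyS)))
      (mul_mem (ofNat_mem S 2) (hES _ hnE))
  have hS : ⊤ ≤ S := by
    rw [← hgen, adjoin_le_iff]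
    rintro _ (rfl | rfl | rfl) <;> assumption
  refine E.fixedField_zpowers_eq τ hfix x ?_ fun a => hS trivial
  rw [hx]
  exact (sub_ne_zero.mp hd).symm

end Algebra

end Tau3

theorem Tau3.t₂_sq_sub_t₃_sq_ne_zero {k : Type} [Field k] {c : k} (hc : c ≠ 0)
    (h2 : (2 : RatFn k (Fin 3)) ≠ 0) :
    t₂ (algebraMap k _ c) (Xv k 0) (Xv k 1) (Xv k (2 : Fin 3)) ^ 2
      - t₃ (algebraMap k _ c) (Xv k 0) (Xv k 1) (Xv k (2 : Fin 3)) ^ 2 ≠ 0 := by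
  have hA : algebraMap k _ c - Xv k (1 : Fin 3) ^ 2 * Xv k 2 ^ 2 ≠ 0 := by
    have := aeval_Xv_ne_zero (p := (C c - X 1 ^ 2 * X 2 ^ 2 : MvPolynomial (Fin 3) k))
      fun h => hc (by simpa using congrArg (eval 0) h)
    simpa only [map_sub, map_mul, map_pow, aeval_C, aeval_X] using this
  have hB : Xv k (0 : Fin 3) ^ 2 * Xv k 2 ^ 2 - algebraMap k _ c ≠ 0 := by
    have := aeval_Xv_ne_zero (p := (X 0 ^ 2 * X 2 ^ 2 - C c : MvPolynomial (Fin 3) k))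
      fun h => hc (by simpa using congrArg (eval 0) h)
    simpa only [map_sub, map_mul, map_pow, aeval_C, aeval_X] using this
  have h4 : (4 : RatFn k (Fin 3)) ≠ 0 := by
    rw [show (4 : RatFn k (Fin 3)) = 2 * 2 by norm_num]; exact mul_ne_zero h2 h2
  rw [t₂_sq_sub_t₃_sq (Xv_ne_zero 2) (Xv_add_Xv_ne_zero (by decide))
    (sub_ne_zero.mpr (Xv_injective.ne (by decide)))]
  simp [h4, hA, hB, Xv_ne_zero, Xv_add_Xv_ne_zero, sub_eq_zero, Xv_injective.eq_iff]

/-- **Hoshi–Kitayama–Yamasaki.** Let `k` be a field of characteristic `≠ 2`, `c ∈ kˣ`, and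
let `τ₃` be the `k`-automorphism of `k(x,y,z)` with `τ₃ : x ↦ y, y ↦ x, z ↦ c/(xyz)`.
Then `k(x,y,z)^⟨τ₃⟩ = k(t₁,t₂,t₃)` where `t₁ = xy/(x+y)`, `t₂ = (xyz + c/z)/(x+y)` and
`t₃ = (xyz − c/z)/(x−y)`. -/
theorem statement16 (k : Type) [Field k] (hk2 : ringChar k ≠ 2) (c : k) (hc : c ≠ 0)
    (τ : RatFnAut k (Fin 3))
    (hx : τ (Xv k (0 : Fin 3)) = Xv k (1 : Fin 3))
    (hy : τ (Xv k (1 : Fin 3)) = Xv k (0 : Fin 3))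
    (hz : τ (Xv k (2 : Fin 3)) =
      algebraMap k (RatFn k (Fin 3)) c
        / (Xv k (0 : Fin 3) * Xv k (1 : Fin 3) * Xv k (2 : Fin 3))) :
    IntermediateField.fixedField (Subgroup.zpowers τ) =
      IntermediateField.adjoin k
        ({ Xv k (0 : Fin 3) * Xv k (1 : Fin 3) / (Xv k (0 : Fin 3) + Xv k (1 : Fin 3)),
           (Xv k (0 : Fin 3) * Xv k (1 : Fin 3) * Xv k (2 : Fin 3)
              + algebraMap k (RatFn k (Fin 3)) c / Xv k (2 : Fin 3))
             / (Xv k (0 : Fin 3) + Xv k (1 : Fin 3)),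
           (Xv k (0 : Fin 3) * Xv k (1 : Fin 3) * Xv k (2 : Fin 3)
              - algebraMap k (RatFn k (Fin 3)) c / Xv k (2 : Fin 3))
             / (Xv k (0 : Fin 3) - Xv k (1 : Fin 3)) } : Set (RatFn k (Fin 3))) := by
  have h2 : (2 : RatFn k (Fin 3)) ≠ 0 := by
    have := (map_ne_zero (algebraMap k (RatFn k (Fin 3)))).mpr (Ring.two_ne_zero hk2)
    rwa [map_ofNat] at this
  have hgen : adjoin k {Xv k (0 : Fin 3), Xv k 1, Xv k 2} = ⊤ := by
    rw [← adjoin_range_Xv]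
    congr
    ext
    simp [Fin.exists_fin_succ, eq_comm]
  exact Tau3.fixedField_zpowers_eq_adjoin_gens h2 ((map_ne_zero _).mpr hc) (Xv_ne_zero _)
    (Xv_ne_zero _) (Xv_ne_zero _) (Xv_add_Xv_ne_zero (by decide))
    (sub_ne_zero.mpr (Xv_injective.ne (by decide))) (Tau3.t₂_sq_sub_t₃_sq_ne_zero hc h2) hgen hx hy hz
end
end
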